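/- (Second order convergence of SOVI) Let S and A be finite nonempty sets, p : S × A × S → ℝ with p(j|i,a) ≥ 0 and Σ_{j∈S} p(j|i,a) = 1 for all (i,a), r : S × A → ℝ, 0 ≤ γ < 1, and N > 0. Let Q* be the unique fixed point of the modified Bellman operator U, let Q_0 : S × A → ℝ be arbitrary, and let Q_{n+1} = Q_n − (I − J_U(Q_n))^{-1}·(Q_n − UQ_n) be the SOVI iterates. Then there exists a constant k > 0 such that for all n ≥ 0, ‖Q_{n+1} − Q*‖ ≤ k·‖Q_n − Q*‖², where ‖·‖ is the sup norm on ℝ^{S×A}. -/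

import Mathlib

/-- The modified (log-sum-exp) Bellman operator `U` on `Q : S × A → ℝ`:
`(UQ)(i,a) = r(i,a) + γ·Σ_j p(j|i,a)·(1/N)·log(Σ_b e^{N·Q(j,b)})`. -/
noncomputable def modBellmanU {S A : Type*} [Fintype S] [Fintype A]
    (p : S → A → S → ℝ) (r : S → A → ℝ) (γ N : ℝ) (Q : S × A → ℝ) : S × A → ℝ :=
  fun ia => r ia.1 ia.2 + γ * ∑ j, p ia.1 ia.2 j *
    ((1 / N) * Real.log (∑ b, Real.exp (N * Q (j, b))))

/-- The Jacobian matrix of the modified Bellman operator: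
`J_U(Q)((i,a),(k,c)) = γ·p(k|i,a)·e^{N·Q(k,c)} / Σ_b e^{N·Q(k,b)}`. -/
noncomputable def jacU {S A : Type*} [Fintype A]
    (p : S → A → S → ℝ) (γ N : ℝ) (Q : S × A → ℝ) : Matrix (S × A) (S × A) ℝ :=
  Matrix.of fun ia kc =>
    γ * p ia.1 ia.2 kc.1 * (Real.exp (N * Q kc) / ∑ b, Real.exp (N * Q (kc.1, b)))

/-- Sup norm of `Q : S × A → ℝ`. -/
noncomputable def qSupNorm {S A : Type*} [Fintype S] [Fintype A] [Nonempty S] [Nonempty A]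
    (Q : S × A → ℝ) : ℝ :=
  Finset.univ.sup' Finset.univ_nonempty (fun ia : S × A => |Q ia|)

/-!
Write `x = Q_n - Q*`, `y = Q_{n+1} - Q*` and `J = J_U(Q_n)`. Since `Q*` is a fixed point, the
Newton step gives `(I - J) y = (U Q_n - U Q*) - J x`. The matrix `J` is nonnegative with row sums
`γ`, so `‖J z‖ ≤ γ‖z‖`, whence `(1 - γ)‖y‖ ≤ ‖(I - J) y‖` (and `I - J` is invertible). Row by row,
`(U Q_n - U Q*) - J x` is `γ` times a `p`-average of second-order remainders
`lse(v) - lse(w) - ⟨σ(v), v - w⟩` of the log-sum-exp `lse` with gradient the softmax `σ`, and each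
is at most `2N‖v - w‖²`. Hence `‖y‖ ≤ 2N/(1 - γ) · ‖x‖²`.
-/

open Finset Real

lemma abs_sum_mul_le_of_sum_eq_one {ι : Type*} {s : Finset ι} {w f : ι → ℝ} {B : ℝ}
    (hw0 : ∀ i ∈ s, 0 ≤ w i) (hw1 : ∑ i ∈ s, w i = 1) (hf : ∀ i ∈ s, |f i| ≤ B) :
    |∑ i ∈ s, w i * f i| ≤ B :=
  calc |∑ i ∈ s, w i * f i| ≤ ∑ i ∈ s, w i * B := by
        refine (abs_sum_le_sum_abs _ _).trans (sum_le_sum fun i hi => ?_)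
        rw [abs_mul, abs_of_nonneg (hw0 i hi)]
        exact mul_le_mul_of_nonneg_left (hf i hi) (hw0 i hi)
    _ = B := by rw [← sum_mul, hw1, one_mul]

section Softmax

variable {A : Type*} [Fintype A]

noncomputable def logSumExp (N : ℝ) (v : A → ℝ) : ℝ :=
  (1 / N) * log (∑ b, exp (N * v b))

noncomputable def softmax (N : ℝ) (v : A → ℝ) (c : A) : ℝ :=
  exp (N * v c) / ∑ b, exp (N * v b)

variable [Nonempty A]

lemma sum_exp_mul_pos (N : ℝ) (v : A → ℝ) : 0 < ∑ b, exp (N * v b) :=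
  sum_pos (fun _ _ => exp_pos _) univ_nonempty

lemma softmax_nonneg (N : ℝ) (v : A → ℝ) (c : A) : 0 ≤ softmax N v c :=
  div_nonneg (exp_pos _).le (sum_exp_mul_pos N v).le

lemma sum_softmax (N : ℝ) (v : A → ℝ) : ∑ c, softmax N v c = 1 := by
  simp only [softmax]
  rw [← sum_div, div_self (sum_exp_mul_pos N v).ne']

lemma abs_sum_softmax_mul_le (N : ℝ) (v : A → ℝ) {f : A → ℝ} {B : ℝ} (hf : ∀ c, |f c| ≤ B) :
    |∑ c, softmax N v c * f c| ≤ B :=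
  abs_sum_mul_le_of_sum_eq_one (fun c _ => softmax_nonneg N v c) (sum_softmax N v)
    fun c _ => hf c

lemma hasDerivAt_softmax_line (N : ℝ) (v d : A → ℝ) (c : A) (t : ℝ) :
    HasDerivAt (fun s => softmax N (v + s • d) c)
      (N * softmax N (v + t • d) c * (d c - ∑ b, softmax N (v + t • d) b * d b)) t := by
  have hexp (b : A) : HasDerivAt (fun s => exp (N * (v + s • d) b))
      (exp (N * (v + t • d) b) * (N * d b)) t := by
    simpa using ((((hasDerivAt_id t).mul_const (d b)).const_add (v b)).const_mul N).exp
  have hZ := (sum_exp_mul_pos N (v + t • d)).ne'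
  refine ((hexp c).div (HasDerivAt.fun_sum fun b _ => hexp b) hZ).congr_deriv ?_
  have hsm : ∑ b, softmax N (v + t • d) b * d b
      = (∑ b, exp (N * (v + t • d) b) * d b) / ∑ b, exp (N * (v + t • d) b) := by
    simp only [softmax, div_mul_eq_mul_div, sum_div]
  have hsum_mul : ∑ b, exp (N * (v + t • d) b) * (N * d b)
      = N * ∑ b, exp (N * (v + t • d) b) * d b := by
    rw [mul_sum]; exact sum_congr rfl fun b _ => by ring
  rw [hsm, hsum_mul, softmax]
  field_simp

/-- The derivative of `t ↦ ⟨σ(w + t d), d⟩` is `N` times the variance of `d` under `σ(w + t d)`. -/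
lemma abs_sum_softmax_sub_softmax_mul_le (N : ℝ) (v w : A → ℝ) :
    |∑ c, softmax N v c * (v c - w c) - ∑ c, softmax N w c * (v c - w c)|
      ≤ 2 * |N| * ‖v - w‖ ^ 2 := by
  set d := v - w
  have hd (c : A) : |d c| ≤ ‖d‖ := by rw [← Real.norm_eq_abs]; exact norm_le_pi_norm d c
  have hderiv (t : ℝ) : HasDerivAt (fun s => ∑ c, softmax N (w + s • d) c * d c)
      (N * ∑ c, softmax N (w + t • d) c * ((d c - ∑ b, softmax N (w + t • d) b * d b) * d c)) t := by
    refine (HasDerivAt.fun_sum fun c _ =>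
      (hasDerivAt_softmax_line N w d c t).mul_const (d c)).congr_deriv ?_
    rw [mul_sum]
    exact sum_congr rfl fun c _ => by ring
  have hbound (t : ℝ) : ‖N * ∑ c, softmax N (w + t • d) c
      * ((d c - ∑ b, softmax N (w + t • d) b * d b) * d c)‖ ≤ 2 * |N| * ‖d‖ ^ 2 := by
    have hmean := abs_sum_softmax_mul_le N (w + t • d) hd
    have hterm (c : A) : |(d c - ∑ b, softmax N (w + t • d) b * d b) * d c| ≤ 2 * ‖d‖ ^ 2 :=
      calc |(d c - ∑ b, softmax N (w + t • d) b * d b) * d c|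
          = |d c - ∑ b, softmax N (w + t • d) b * d b| * |d c| := abs_mul _ _
        _ ≤ (2 * ‖d‖) * ‖d‖ :=
          mul_le_mul
            (by linarith [abs_sub (d c) (∑ b, softmax N (w + t • d) b * d b), hd c, hmean])
            (hd c) (abs_nonneg _) (by positivity)
        _ = 2 * ‖d‖ ^ 2 := by ring
    rw [Real.norm_eq_abs, abs_mul]
    exact (mul_le_mul_of_nonneg_left (abs_sum_softmax_mul_le N (w + t • d) hterm)
      (abs_nonneg N)).trans_eq (by ring)
  have key := norm_image_sub_le_of_norm_deriv_le_segment_01'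
    (fun t _ => (hderiv t).hasDerivWithinAt) (fun t _ => hbound t)
  simpa [d, Real.norm_eq_abs] using key

lemma sum_softmax_mul_sub_le_logSumExp_sub {N : ℝ} (hN : 0 < N) (v w : A → ℝ) :
    ∑ c, softmax N v c * (w c - v c) ≤ logSumExp N w - logSumExp N v := by
  have hZv := sum_exp_mul_pos N v
  have hjensen := convexOn_exp.map_sum_le (t := univ) (w := softmax N v)
    (p := fun b => N * (w b - v b)) (fun c _ => softmax_nonneg N v c) (sum_softmax N v)
    (fun _ _ => Set.mem_univ _)
  have hratio : ∑ b, softmax N v b * exp (N * (w b - v b))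
      = (∑ b, exp (N * w b)) / ∑ b, exp (N * v b) := by
    simp only [softmax, div_mul_eq_mul_div, ← sum_div, mul_sub, exp_sub]
    congr 1
    exact sum_congr rfl fun b _ => by field_simp
  simp only [smul_eq_mul, hratio] at hjensen
  rw [← le_log_iff_exp_le (div_pos (sum_exp_mul_pos N w) hZv), log_div
    (sum_exp_mul_pos N w).ne' hZv.ne'] at hjensen
  rw [logSumExp, logSumExp, ← mul_sub, one_div, le_inv_mul_iff₀ hN, mul_sum]
  simpa only [mul_left_comm N] using hjensen

/-- By convexity of `logSumExp N`, the remainder lies between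
`-⟨σ(v) - σ(w), v - w⟩` and `0`. -/
lemma abs_logSumExp_sub_sub_le {N : ℝ} (hN : 0 < N) (v w : A → ℝ) :
    |logSumExp N v - logSumExp N w - ∑ c, softmax N v c * (v c - w c)|
      ≤ 2 * N * ‖v - w‖ ^ 2 := by
  have hvw := sum_softmax_mul_sub_le_logSumExp_sub hN v w
  have hwv := sum_softmax_mul_sub_le_logSumExp_sub hN w v
  have hgap := abs_sum_softmax_sub_softmax_mul_le N v w
  have hneg : ∑ c, softmax N v c * (w c - v c) = -∑ c, softmax N v c * (v c - w c) := by
    rw [← sum_neg_distrib]; exact sum_congr rfl fun c _ => by ring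
  rw [abs_of_pos hN] at hgap
  rw [abs_le] at hgap ⊢
  constructor <;> linarith

end Softmax

section NewtonStep

open Matrix

variable {ι : Type*} [Fintype ι] [DecidableEq ι] {J : Matrix ι ι ℝ} {γ : ℝ}

lemma one_sub_mul_norm_le_norm_one_sub_mulVec {z : ι → ℝ} (hJ : ‖J *ᵥ z‖ ≤ γ * ‖z‖) :
    (1 - γ) * ‖z‖ ≤ ‖(1 - J) *ᵥ z‖ := by
  rw [sub_mulVec, one_mulVec]
  linarith [norm_le_norm_add_norm_sub' z (J *ᵥ z)]

lemma isUnit_det_one_sub_of_norm_mulVec_le (hγ : γ < 1) (hJ : ∀ z, ‖J *ᵥ z‖ ≤ γ * ‖z‖) :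
    IsUnit (1 - J).det := by
  refine isUnit_iff_ne_zero.mpr fun hdet => ?_
  obtain ⟨z, hz0, hz⟩ := exists_mulVec_eq_zero_iff.mpr hdet
  have := one_sub_mul_norm_le_norm_one_sub_mulVec (hJ z)
  rw [hz, norm_zero] at this
  exact hz0 (norm_le_zero_iff.mp (nonpos_of_mul_nonpos_right this (by linarith)))

lemma one_sub_mulVec_newton_step_sub {F : (ι → ℝ) → ι → ℝ} {xs : ι → ℝ} (hxs : F xs = xs)
    (hdet : IsUnit (1 - J).det) (x : ι → ℝ) :
    (1 - J) *ᵥ (x - (1 - J)⁻¹ *ᵥ (x - F x) - xs) = F x - F xs - J *ᵥ (x - xs) := by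
  rw [mulVec_sub, mulVec_sub, mulVec_mulVec, mul_nonsing_inv _ hdet,
    one_mulVec, sub_mulVec, sub_mulVec, one_mulVec,
    one_mulVec, mulVec_sub, hxs]
  abel

end NewtonStep

section Bellman

open Matrix

variable {S A : Type*} [Fintype S] [Fintype A]

lemma modBellmanU_apply (p : S → A → S → ℝ) (r : S → A → ℝ) (γ N : ℝ) (Q : S × A → ℝ)
    (i : S) (a : A) :
    modBellmanU p r γ N Q (i, a) = r i a + γ * ∑ j, p i a j * logSumExp N (Function.curry Q j) :=
  rfl

lemma jacU_mulVec_apply (p : S → A → S → ℝ) (γ N : ℝ) (Q z : S × A → ℝ) (i : S) (a : A) :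
    (jacU p γ N Q *ᵥ z) (i, a)
      = γ * ∑ j, p i a j * ∑ c, softmax N (Function.curry Q j) c * z (j, c) := by
  simp only [mulVec, dotProduct, Fintype.sum_prod_type, mul_sum]
  exact sum_congr rfl fun j _ => sum_congr rfl fun c _ => by simp [jacU, softmax]; ring

lemma norm_curry_le (f : S × A → ℝ) (j : S) : ‖Function.curry f j‖ ≤ ‖f‖ :=
  (pi_norm_le_iff_of_nonneg (norm_nonneg f)).mpr fun b => norm_le_pi_norm f (j, b)

variable [Nonempty A] {p : S → A → S → ℝ} (hp0 : ∀ i a j, 0 ≤ p i a j)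
  (hp1 : ∀ i a, ∑ j, p i a j = 1) {γ : ℝ} (hγ0 : 0 ≤ γ)
include hp0 hp1 hγ0

lemma norm_jacU_mulVec_le (N : ℝ) (Q z : S × A → ℝ) : ‖jacU p γ N Q *ᵥ z‖ ≤ γ * ‖z‖ := by
  refine (pi_norm_le_iff_of_nonneg (by positivity)).mpr fun ⟨i, a⟩ => ?_
  rw [jacU_mulVec_apply, Real.norm_eq_abs, abs_mul, abs_of_nonneg hγ0]
  refine mul_le_mul_of_nonneg_left ?_ hγ0
  refine abs_sum_mul_le_of_sum_eq_one (fun j _ => hp0 i a j) (hp1 i a) fun j _ => ?_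
  refine abs_sum_softmax_mul_le N _ fun c => ?_
  rw [← Real.norm_eq_abs]
  exact norm_le_pi_norm z (j, c)

lemma norm_modBellmanU_sub_sub_jacU_mulVec_le (r : S → A → ℝ) {N : ℝ} (hN : 0 < N)
    (Q Q' : S × A → ℝ) :
    ‖modBellmanU p r γ N Q - modBellmanU p r γ N Q' - jacU p γ N Q *ᵥ (Q - Q')‖
      ≤ γ * (2 * N * ‖Q - Q'‖ ^ 2) := by
  refine (pi_norm_le_iff_of_nonneg (by positivity)).mpr fun ⟨i, a⟩ => ?_
  have hrow : modBellmanU p r γ N Q (i, a) - modBellmanU p r γ N Q' (i, a)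
        - (jacU p γ N Q *ᵥ (Q - Q')) (i, a)
      = γ * ∑ j, p i a j * (logSumExp N (Function.curry Q j) - logSumExp N (Function.curry Q' j)
          - ∑ c, softmax N (Function.curry Q j) c
              * (Function.curry Q j c - Function.curry Q' j c)) := by
    simp only [modBellmanU_apply, jacU_mulVec_apply, Pi.sub_apply, Function.curry_apply,
      mul_sub, sum_sub_distrib]
    ring
  rw [Pi.sub_apply, Pi.sub_apply, hrow, Real.norm_eq_abs, abs_mul, abs_of_nonneg hγ0]
  refine mul_le_mul_of_nonneg_left ?_ hγ0
  refine abs_sum_mul_le_of_sum_eq_one (fun j _ => hp0 i a j) (hp1 i a) fun j _ => ?_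
  refine (abs_logSumExp_sub_sub_le hN _ _).trans ?_
  gcongr
  exact norm_curry_le (Q - Q') j

end Bellman

lemma qSupNorm_eq_norm {S A : Type*} [Fintype S] [Fintype A] [Nonempty S] [Nonempty A]
    (Q : S × A → ℝ) : qSupNorm Q = ‖Q‖ := by
  have hle (ia : S × A) : |Q ia| ≤ qSupNorm Q := le_sup' (fun ia => |Q ia|) (mem_univ ia)
  refine le_antisymm (sup'_le _ _ fun ia _ => norm_le_pi_norm Q ia) ?_
  exact (pi_norm_le_iff_of_nonneg ((abs_nonneg _).trans (hle (Classical.arbitrary _)))).mpr hle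

/-- **Second order convergence of SOVI.** If `Q*` is the unique fixed point of the
modified Bellman operator `U` and `Q_{n+1} = Q_n − (I − J_U(Q_n))⁻¹ (Q_n − U Q_n)`
are the SOVI iterates, then there is `k > 0` with
`‖Q_{n+1} − Q*‖ ≤ k·‖Q_n − Q*‖²` for all `n`. -/
theorem sovi_second_order_convergence {S A : Type*}
    [Fintype S] [Fintype A] [Nonempty S] [Nonempty A] [DecidableEq S] [DecidableEq A]
    (p : S → A → S → ℝ) (hp0 : ∀ i a j, 0 ≤ p i a j) (hp1 : ∀ i a, ∑ j, p i a j = 1)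
    (r : S → A → ℝ) (γ : ℝ) (hγ0 : 0 ≤ γ) (hγ1 : γ < 1) (N : ℝ) (hN : 0 < N)
    (Qstar : S × A → ℝ) (hQstar : modBellmanU p r γ N Qstar = Qstar)
    (Q : ℕ → S × A → ℝ)
    (hiter : ∀ n : ℕ, Q (n + 1) = Q n -
      ((1 : Matrix (S × A) (S × A) ℝ) - jacU p γ N (Q n))⁻¹.mulVec
        (Q n - modBellmanU p r γ N (Q n))) :
    ∃ k : ℝ, 0 < k ∧ ∀ n : ℕ,
      qSupNorm (Q (n + 1) - Qstar) ≤ k * qSupNorm (Q n - Qstar) ^ 2 := by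
  have h1γ : 0 < 1 - γ := by linarith
  refine ⟨2 * N / (1 - γ), by positivity, fun n => ?_⟩
  have hJ := norm_jacU_mulVec_le hp0 hp1 hγ0 N (Q n)
  have hdet := isUnit_det_one_sub_of_norm_mulVec_le hγ1 hJ
  have hstep := one_sub_mulVec_newton_step_sub hQstar hdet (Q n)
  rw [← hiter n] at hstep
  have hres := norm_modBellmanU_sub_sub_jacU_mulVec_le hp0 hp1 hγ0 r hN (Q n) Qstar
  rw [← hstep] at hres
  have hy := (one_sub_mul_norm_le_norm_one_sub_mulVec (hJ _)).trans hres
  rw [qSupNorm_eq_norm, qSupNorm_eq_norm, div_mul_eq_mul_div, le_div_iff₀ h1γ]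
  linarith [mul_le_of_le_one_left (by positivity : 0 ≤ 2 * N * ‖Q n - Qstar‖ ^ 2) hγ1.le]
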